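/- arXiv:1811.03993 — 6 statements merged into one kernel-verified Lean document; each statement's English description precedes it below -/
import Mathlib

section
/- In the unit interval [0,1] with the usual order, the Łukasiewicz tensor u ⊙ v = max(0, u + v − 1), and unit 1, for all u, v, w ∈ [0,1]: min(w, u ⊙ v) = sup { u' ⊙ v' | u' ≤ u, v' ≤ v, u' ⊙ v' ≤ w }. -/
/-- In `[0,1]` with the Łukasiewicz tensor `u ⊙ v = max 0 (u + v - 1)` and unit `1`:
`min(w, u ⊙ v) = sup { u' ⊙ v' | u' ≤ u, v' ≤ v, u' ⊙ v' ≤ w }`. -/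
theorem lukasiewicz_interpolation (u v w : ℝ)
    (hu : u ∈ Set.Icc (0:ℝ) 1) (hv : v ∈ Set.Icc (0:ℝ) 1) (hw : w ∈ Set.Icc (0:ℝ) 1) :
    min w (max 0 (u + v - 1)) =
      sSup {x : ℝ | ∃ u' v', u' ∈ Set.Icc (0:ℝ) 1 ∧ v' ∈ Set.Icc (0:ℝ) 1 ∧
        u' ≤ u ∧ v' ≤ v ∧ max 0 (u' + v' - 1) ≤ w ∧ x = max 0 (u' + v' - 1)} := by
  obtain ⟨hu0, hu1⟩ := hu
  obtain ⟨hv0, hv1⟩ := hv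
  obtain ⟨hw0, hw1⟩ := hw
  set S := {x : ℝ | ∃ u' v', u' ∈ Set.Icc (0:ℝ) 1 ∧ v' ∈ Set.Icc (0:ℝ) 1 ∧
        u' ≤ u ∧ v' ≤ v ∧ max 0 (u' + v' - 1) ≤ w ∧ x = max 0 (u' + v' - 1)} with hS
  have hbdd : ∀ x ∈ S, x ≤ min w (max 0 (u + v - 1)) := by
    rintro x ⟨u', v', ⟨_, _⟩, ⟨_, _⟩, h1, h2, h3, rfl⟩
    exact le_min h3 (max_le_max le_rfl (by linarith))
  apply le_antisymm
  · -- min w (u⊙v) is in the set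
    have hmem : min w (max 0 (u + v - 1)) ∈ S := by
      rcases le_or_gt (max 0 (u + v - 1)) w with h | h
      · exact ⟨u, v, ⟨hu0, hu1⟩, ⟨hv0, hv1⟩, le_rfl, le_rfl, h,
          (min_eq_right h).symm ▸ rfl⟩
      · have hw' : w < u + v - 1 := by by_contra hc; push_neg at hc; exact (max_le hw0 hc).not_gt h
        refine ⟨u, w + 1 - u, ⟨hu0, hu1⟩, ⟨by linarith, by linarith⟩,
          le_rfl, by linarith, ?_, ?_⟩
        · simp only [show u + (w + 1 - u) - 1 = w by ring]
          exact max_le hw0 le_rfl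
        · rw [min_eq_left h.le]
          simp only [show u + (w + 1 - u) - 1 = w by ring]
          exact (max_eq_right hw0).symm
    exact le_csSup ⟨_, hbdd⟩ hmem
  · exact csSup_le ⟨0, 0, 0, ⟨le_rfl, zero_le_one⟩, ⟨le_rfl, zero_le_one⟩, hu0, hv0,
      by norm_num; linarith, by norm_num⟩ hbdd
end

section
/- Every continuous t-norm on [0,1] satisfies the exponentiability condition: if ⊗ : [0,1] × [0,1] → [0,1] is associative, commutative, monotone in each variable, continuous (with respect to the Euclidean topology), and has unit 1, then for all u, v, w ∈ [0,1]: min(w, u ⊗ v) = sup { u' ⊗ v' | u' ≤ u, v' ≤ v, u' ⊗ v' ≤ w }. -/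
open unitInterval

instance : Fact ((0:ℝ) ≤ 1) := ⟨zero_le_one⟩

/-- Every continuous t-norm on `[0,1]` (associative, commutative, monotone in each
variable, continuous, with unit `1`) satisfies
`min(w, u ⊗ v) = sup { u' ⊗ v' | u' ≤ u, v' ≤ v, u' ⊗ v' ≤ w }`. -/
theorem continuous_tnorm_interpolation (t : I → I → I)
    (hcont : Continuous fun p : I × I => t p.1 p.2)
    (hassoc : ∀ a b c : I, t (t a b) c = t a (t b c))
    (hcomm : ∀ a b : I, t a b = t b a)
    (hmono : ∀ a : I, Monotone (t a))
    (hunit : ∀ a : I, t 1 a = a) :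
    ∀ u v w : I, min w (t u v) =
      sSup {x : I | ∃ u' v', u' ≤ u ∧ v' ≤ v ∧ t u' v' ≤ w ∧ x = t u' v'} := by
  intro u v w
  have hmono1 : ∀ b : I, Monotone (fun a => t a b) := by
    intro b a a' h
    simp only [hcomm _ b]
    exact hmono b h
  have hle : ∀ a b : I, t a b ≤ min a b := by
    intro a b
    refine le_min ?_ ?_
    · calc t a b ≤ t a 1 := hmono a le_one'
      _ = a := by rw [hcomm, hunit]
    · calc t a b ≤ t 1 b := hmono1 b le_one'
      _ = b := hunit b
  rcases le_or_gt (t u v) w with h | h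
  · rw [min_eq_right h]
    refine le_antisymm (le_sSup ⟨u, v, le_rfl, le_rfl, h, rfl⟩) (sSup_le ?_)
    rintro x ⟨u', v', hu, hv, _, rfl⟩
    calc t u' v' ≤ t u' v := hmono u' hv
      _ ≤ t u v := hmono1 v hu
  · rw [min_eq_left h.le]
    refine le_antisymm ?_ (sSup_le ?_)
    · -- IVT: find u' ∈ [0, u] with t u' v = w
      have hf : Continuous (fun a : I => t a v) :=
        hcont.comp (continuous_id.prodMk continuous_const)
      have h0 : t 0 v = 0 :=
        le_antisymm ((hle 0 v).trans (min_le_left _ _)) (t 0 v).2.1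
      have hmem : w ∈ Set.Icc (t 0 v) (t u v) := ⟨by rw [h0]; exact nonneg', h.le⟩
      obtain ⟨u', hu', hfu'⟩ :=
        intermediate_value_Icc (α := I) (nonneg' (t := u)) hf.continuousOn hmem
      exact le_sSup ⟨u', v, hu'.2, le_rfl, hfu'.le, hfu'.symm⟩
    · rintro x ⟨u', v', hu, hv, hw, rfl⟩
      exact hw
end

section
/- In a V-category (X, a₀) that is injective with respect to fully faithful V-functors and carries the tensor action x ⊕ u := Sup_X(ã(x,u)) induced by the Yoneda embedding, one has a₀(x ⊕ u, y) = hom(u, a₀(x, y)) for all x, y ∈ X and u ∈ V, where Sup_X ⊣ y_X. -/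
/-- For an injective `V`-category `(X, a)`, with `Sup_X ⊣ y_X` witnessing injectivity and
the action `x ⊕ u := Sup_X(ã(x,u))` where `ã(x,u)(z) = a(z,x) ⊗ u`, one has
`a(x ⊕ u, y) = hom(u, a(x, y))`.  The adjunction `Sup_X ⊣ y_X` is expressed by
`a(Sup φ, y) = [φ, y_X y] = ⋀_z hom(φ z, a(z, y))`. -/
theorem injective_action_hom
    {V : Type*} [CompleteLattice V] [CommMonoid V]
    (hd : ∀ (x : V) (S : Set V), x * sSup S = ⨆ y ∈ S, x * y)
    (hom : V → V → V) (hadj : ∀ u v w : V, u * v ≤ w ↔ v ≤ hom u w)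
    {X : Type*} (a : X → X → V)
    (hrefl : ∀ x, 1 ≤ a x x)
    (htrans : ∀ x y z, a x y * a y z ≤ a x z)
    (Sup : (X → V) → X)
    (hSup : ∀ (φ : X → V) (y : X), a (Sup φ) y = ⨅ z, hom (φ z) (a z y)) :
    ∀ (x y : X) (u : V), a (Sup fun z => a z x * u) y = hom u (a x y) := by
  -- counit: u * hom u w ≤ w
  have hcounit : ∀ u w : V, u * hom u w ≤ w := fun u w => (hadj u (hom u w) w).mpr le_rfl
  -- monotone in right argument
  have hmono : ∀ u v v' : V, v ≤ v' → u * v ≤ u * v' := by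
    intro u v v' h
    exact (hadj u v (u * v')).mpr (h.trans ((hadj u v' (u * v')).mp le_rfl))
  intro x y u
  rw [hSup]
  apply le_antisymm
  · refine le_trans (iInf_le _ x) ?_
    -- hom (a x x * u) (a x y) ≤ hom u (a x y)
    rw [← hadj]
    have h1 : u ≤ a x x * u := by
      calc u = 1 * u := (one_mul u).symm
      _ ≤ a x x * u := by
        rw [mul_comm, mul_comm (a x x)]; exact hmono u 1 (a x x) (hrefl x)
    calc u * hom (a x x * u) (a x y) ≤ (a x x * u) * hom (a x x * u) (a x y) := by
          rw [mul_comm, mul_comm (a x x * u)]; exact hmono _ _ _ h1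
      _ ≤ a x y := hcounit _ _
  · refine le_iInf fun z => ?_
    rw [← hadj]
    calc a z x * u * hom u (a x y) = a z x * (u * hom u (a x y)) := mul_assoc _ _ _
      _ ≤ a z x * a x y := hmono _ _ _ (hcounit _ _)
      _ ≤ a z y := htrans z x y
end

section
/- Let V be a commutative unital quantale satisfying w ∧ (u ⊗ v) = ⋁{ u' ⊗ v' | u' ≤ u, v' ≤ v, u' ⊗ v' ≤ w } for all u, v, w. Let (X, a) be a V-category with an action ⊕ : X × V → X satisfying a(x ⊕ u, y) = hom(u, a(x,y)) for all x, y, u, and such that a(x,x) ≥ k for all x. Then for all x, z ∈ X and u, v ∈ V: ⋁_{y ∈ X} (a(x, y) ∧ u) ⊗ (a(y, z) ∧ v) ≥ a(x, z) ∧ (u ⊗ v). -/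
/-- Identity-monad case of the exponentiability criterion: if the quantale `V`
satisfies `w ⊓ (u*v) = ⋁{u'*v' | u' ≤ u, v' ≤ v, u'*v' ≤ w}` and `(X, a)` is a
`V`-category with an action `⊕` satisfying `a(x ⊕ u, y) = hom(u, a(x,y))` and
`k ≤ a(x,x)`, then `⋁_y (a(x,y) ⊓ u) * (a(y,z) ⊓ v) ≥ a(x,z) ⊓ (u*v)`. -/
theorem injective_vcat_exponentiability_criterion
    {V : Type*} [CompleteLattice V] [CommMonoid V]
    (hd : ∀ (x : V) (S : Set V), x * sSup S = ⨆ y ∈ S, x * y)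
    (hom : V → V → V) (hadj : ∀ u v w : V, u * v ≤ w ↔ v ≤ hom u w)
    (hVint : ∀ u v w : V,
      w ⊓ (u * v) = sSup {x : V | ∃ u' v', u' ≤ u ∧ v' ≤ v ∧ u' * v' ≤ w ∧ x = u' * v'})
    {X : Type*} (a : X → X → V)
    (hrefl : ∀ x, 1 ≤ a x x)
    (htrans : ∀ x y z, a x y * a y z ≤ a x z)
    (op : X → V → X)
    (hact : ∀ (x y : X) (u : V), a (op x u) y = hom u (a x y)) :
    ∀ (x z : X) (u v : V),
      a x z ⊓ (u * v) ≤ ⨆ y : X, (a x y ⊓ u) * (a y z ⊓ v) := by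
  -- multiplication is monotone
  have hmono : ∀ {p q r s : V}, p ≤ q → r ≤ s → p * r ≤ q * s := by
    intro p q r s hpq hrs
    have h1 : ∀ (x : V) {y y' : V}, y ≤ y' → x * y ≤ x * y' := by
      intro x y y' hyy
      have : x * sSup {y, y'} = ⨆ z ∈ ({y, y'} : Set V), x * z := hd x _
      have hsup : sSup ({y, y'} : Set V) = y' := by
        apply le_antisymm
        · exact sSup_le (by rintro z (rfl | rfl) <;> simp [hyy])
        · exact le_sSup (by simp)
      rw [hsup] at this
      rw [this]
      exact le_biSup _ (by simp)
    calc p * r ≤ p * s := h1 p hrs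
      _ = s * p := mul_comm _ _
      _ ≤ s * q := h1 s hpq
      _ = q * s := mul_comm _ _
  intro x z u v
  rw [hVint u v (a x z)]
  apply sSup_le
  rintro w ⟨u', v', hu, hv, hw, rfl⟩
  refine le_trans ?_ (le_iSup _ (op x u'))
  have h1 : u' ≤ a x (op x u') := by
    have : 1 ≤ hom u' (a x (op x u')) := by rw [← hact]; exact hrefl _
    have := (hadj u' 1 (a x (op x u'))).mpr this
    simpa using this
  have h2 : v' ≤ a (op x u') z := by
    rw [hact]; exact (hadj _ _ _).mp hw
  exact hmono (le_inf h1 hu) (le_inf h2 hv)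
end

section
/- In the quantale of distribution functions Δ, for all f, g, h ∈ Δ: min(h, f ⊗ g) = sup { f' ⊗ g' | f' ≤ f, g' ≤ g, f' ⊗ g' ≤ h }, where f ⊗ g (x) = sup_{u + v ≤ x} f(u) · g(v) (with · a fixed continuous t-norm on [0,1] satisfying the analogous condition, e.g. multiplication), the order is pointwise, and meet and sup are taken in the complete lattice Δ. -/
/-- Distribution functions: monotone, left-continuous maps `[0,∞] → [0,1]`.
(Left-continuity `f x = sup_{y < x} f y` forces `f 0 = 0`, with `sup ∅ = 0` in `ℝ`.) -/
def DistFun : Type :=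
  {f : ENNReal → ℝ // (∀ x, f x ∈ Set.Icc (0:ℝ) 1) ∧ Monotone f ∧
    ∀ x, f x = sSup (f '' Set.Iio x)}

/-- The tensor on `Δ`: `(f ⊗ g)(x) = sup { f(u) ⊙ g(v) | u + v ≤ x }`. -/
noncomputable def DistFun.tens (odot : ℝ → ℝ → ℝ) (f g : DistFun) : ENNReal → ℝ :=
  fun x => sSup {t : ℝ | ∃ u v : ENNReal, u + v ≤ x ∧ t = odot (f.1 u) (g.1 v)}

namespace DFAux

lemma distfun_nonneg (f : DistFun) (x : ENNReal) : 0 ≤ f.1 x := (f.2.1 x).1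
lemma distfun_le_one (f : DistFun) (x : ENNReal) : f.1 x ≤ 1 := (f.2.1 x).2
lemma distfun_mem (f : DistFun) (x : ENNReal) : f.1 x ∈ Set.Icc (0:ℝ) 1 := f.2.1 x
lemma distfun_mono (f : DistFun) : Monotone f.1 := f.2.2.1
lemma distfun_lc (f : DistFun) (x : ENNReal) : f.1 x = sSup (f.1 '' Set.Iio x) := f.2.2.2 x

lemma distfun_zero (f : DistFun) : f.1 0 = 0 := by
  have h : Set.Iio (0:ENNReal) = ∅ := by ext z; simp
  rw [distfun_lc f 0, h, Set.image_empty, Real.sSup_empty]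

/-- A step function with jump at `A`, value `c` after the jump. -/
noncomputable def stepFun (A : ENNReal) (c : ℝ) (h0 : 0 ≤ c) (h1 : c ≤ 1) : DistFun := by
  refine ⟨fun y => if A < y then c else 0, fun x => ?_, ?_, ?_⟩
  · dsimp only; split <;> constructor <;> norm_num [h0, h1]
  · intro y z hyz
    dsimp only
    by_cases hA : A < y
    · rw [if_pos hA, if_pos (lt_of_lt_of_le hA hyz)]
    · rw [if_neg hA]; split
      · exact h0
      · exact le_refl 0
  · intro y
    dsimp only
    by_cases hA : A < y
    · rw [if_pos hA]
      obtain ⟨z, hAz, hzy⟩ := exists_between hA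
      have hmem : c ∈ (fun y => if A < y then c else 0) '' Set.Iio y :=
        ⟨z, hzy, by dsimp only; rw [if_pos hAz]⟩
      have hub : ∀ b ∈ (fun y => if A < y then c else 0) '' Set.Iio y, b ≤ c := by
        rintro _ ⟨w, _, rfl⟩
        dsimp only; split
        · exact le_rfl
        · exact h0
      exact le_antisymm (le_csSup ⟨c, hub⟩ hmem) (csSup_le ⟨c, hmem⟩ hub)
    · rw [if_neg hA]
      have hyA : y ≤ A := not_lt.mp hA
      have hval : ∀ w, w < y → (if A < w then c else 0) = 0 := by
        intro w hw
        rw [if_neg (by intro hc; exact absurd (hw.trans_le hyA) (not_lt.mpr hc.le))]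
      rcases eq_or_ne y 0 with rfl | hy0
      · have h : Set.Iio (0:ENNReal) = ∅ := by ext z; simp
        rw [h, Set.image_empty, Real.sSup_empty]
      · have hne : ((fun y => if A < y then c else 0) '' Set.Iio y).Nonempty :=
          ⟨_, 0, pos_iff_ne_zero.mpr hy0, rfl⟩
        have hub : ∀ b ∈ (fun y => if A < y then c else 0) '' Set.Iio y, b ≤ 0 := by
          rintro _ ⟨w, hw, rfl⟩
          exact le_of_eq (hval w hw)
        have hmem : (0:ℝ) ∈ (fun y => if A < y then c else 0) '' Set.Iio y :=
          ⟨0, pos_iff_ne_zero.mpr hy0, hval 0 (pos_iff_ne_zero.mpr hy0)⟩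
        exact le_antisymm (le_csSup ⟨0, hub⟩ hmem) (csSup_le hne hub)

end DFAux

open DFAux


/-- The quantale `Δ` of distribution functions, with tensor induced by a commutative
unital sup-continuous operation `⊙` on `[0,1]` satisfying the interpolation condition,
itself satisfies `min(h, f ⊗ g) = sup { f' ⊗ g' | f' ≤ f, g' ≤ g, f' ⊗ g' ≤ h }`
(meet and supremum in `Δ` being computed pointwise here). -/
theorem distribution_functions_interpolation
    (odot : ℝ → ℝ → ℝ)
    (hmaps : ∀ u v, u ∈ Set.Icc (0:ℝ) 1 → v ∈ Set.Icc (0:ℝ) 1 → odot u v ∈ Set.Icc (0:ℝ) 1)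
    (hcomm : ∀ u v, odot u v = odot v u)
    (hassoc : ∀ u v w, odot (odot u v) w = odot u (odot v w))
    (hmono : ∀ u, u ∈ Set.Icc (0:ℝ) 1 → MonotoneOn (odot u) (Set.Icc (0:ℝ) 1))
    (hunit : ∀ u, u ∈ Set.Icc (0:ℝ) 1 → odot 1 u = u)
    (hsupcont : ∀ (u : ℝ), u ∈ Set.Icc (0:ℝ) 1 → ∀ S : Set ℝ, S.Nonempty → S ⊆ Set.Icc (0:ℝ) 1 →
      odot u (sSup S) = sSup ((odot u) '' S))
    (hint : ∀ u v w, u ∈ Set.Icc (0:ℝ) 1 → v ∈ Set.Icc (0:ℝ) 1 → w ∈ Set.Icc (0:ℝ) 1 →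
      min w (odot u v) = sSup {x : ℝ | ∃ u' v', u' ∈ Set.Icc (0:ℝ) 1 ∧ v' ∈ Set.Icc (0:ℝ) 1 ∧
        u' ≤ u ∧ v' ≤ v ∧ odot u' v' ≤ w ∧ x = odot u' v'}) :
    ∀ (f g h : DistFun) (x : ENNReal),
      min (h.1 x) (DistFun.tens odot f g x) =
        sSup {t : ℝ | ∃ f' g' : DistFun, (∀ y, f'.1 y ≤ f.1 y) ∧ (∀ y, g'.1 y ≤ g.1 y) ∧
          (∀ y, DistFun.tens odot f' g' y ≤ h.1 y) ∧ t = DistFun.tens odot f' g' x} := by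
  -- basic facts about odot
  have icc0 : (0:ℝ) ∈ Set.Icc (0:ℝ) 1 := by norm_num
  have icc1 : (1:ℝ) ∈ Set.Icc (0:ℝ) 1 := by norm_num
  have hzeroR : ∀ v ∈ Set.Icc (0:ℝ) 1, odot v 0 = 0 := by
    intro v hv
    have h1 : odot v 0 = odot 0 v := hcomm v 0
    have h2 : odot 0 v ≤ odot 0 1 := hmono 0 icc0 hv icc1 hv.2
    have h3 : odot 0 1 = 0 := by rw [hcomm]; exact hunit 0 icc0
    have h4 : 0 ≤ odot v 0 := (hmaps v 0 hv icc0).1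
    linarith [h1 ▸ (h3 ▸ h2)]
  have hzeroL : ∀ v ∈ Set.Icc (0:ℝ) 1, odot 0 v = 0 := by
    intro v hv; rw [hcomm]; exact hzeroR v hv
  have hmono2 : ∀ u' u v' v, u' ∈ Set.Icc (0:ℝ) 1 → u ∈ Set.Icc (0:ℝ) 1 →
      v' ∈ Set.Icc (0:ℝ) 1 → v ∈ Set.Icc (0:ℝ) 1 → u' ≤ u → v' ≤ v →
      odot u' v' ≤ odot u v := by
    intro u' u v' v hu' hu hv' hv h1 h2
    calc odot u' v' ≤ odot u' v := hmono u' hu' hv' hv h2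
    _ = odot v u' := hcomm _ _
    _ ≤ odot v u := hmono v hv hu' hu h1
    _ = odot u v := hcomm _ _
  -- tensor set basics
  have Tne : ∀ (f g : DistFun) (x : ENNReal),
      {t : ℝ | ∃ u v : ENNReal, u + v ≤ x ∧ t = odot (f.1 u) (g.1 v)}.Nonempty := by
    intro f g x
    exact ⟨odot (f.1 0) (g.1 0), 0, 0, by simp, rfl⟩
  have Tbdd : ∀ (f g : DistFun) (x : ENNReal),
      BddAbove {t : ℝ | ∃ u v : ENNReal, u + v ≤ x ∧ t = odot (f.1 u) (g.1 v)} := by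
    intro f g x
    refine ⟨1, ?_⟩
    rintro _ ⟨u, v, _, rfl⟩
    exact (hmaps _ _ (distfun_mem f u) (distfun_mem g v)).2
  have tens_le_one : ∀ (f g : DistFun) (x : ENNReal), DistFun.tens odot f g x ≤ 1 := by
    intro f g x
    apply csSup_le (Tne f g x)
    rintro _ ⟨u, v, _, rfl⟩
    exact (hmaps _ _ (distfun_mem f u) (distfun_mem g v)).2
  -- tensor of two step functions
  have tens_step : ∀ (A B : ENNReal) (c d : ℝ) (hc0 : 0 ≤ c) (hc1 : c ≤ 1)
      (hd0 : 0 ≤ d) (hd1 : d ≤ 1) (y : ENNReal),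
      DistFun.tens odot (stepFun A c hc0 hc1) (stepFun B d hd0 hd1) y =
        if A + B < y then odot c d else 0 := by
    intro A B c d hc0 hc1 hd0 hd1 y
    have hcI : c ∈ Set.Icc (0:ℝ) 1 := ⟨hc0, hc1⟩
    have hdI : d ∈ Set.Icc (0:ℝ) 1 := ⟨hd0, hd1⟩
    have hFI : ∀ μ : ENNReal, (stepFun A c hc0 hc1).1 μ ∈ Set.Icc (0:ℝ) 1 :=
      distfun_mem _
    have hGI : ∀ ν : ENNReal, (stepFun B d hd0 hd1).1 ν ∈ Set.Icc (0:ℝ) 1 :=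
      distfun_mem _
    have hFval : ∀ μ, (stepFun A c hc0 hc1).1 μ = if A < μ then c else 0 := fun _ => rfl
    have hGval : ∀ ν, (stepFun B d hd0 hd1).1 ν = if B < ν then d else 0 := fun _ => rfl
    have hub : ∀ s ∈ {t : ℝ | ∃ u v : ENNReal, u + v ≤ y ∧
        t = odot ((stepFun A c hc0 hc1).1 u) ((stepFun B d hd0 hd1).1 v)},
        s ≤ if A + B < y then odot c d else 0 := by
      rintro _ ⟨μ, ν, hμν, rfl⟩
      by_cases hA : A < μ
      · by_cases hB : B < ν
        · have hy : A + B < y := lt_of_lt_of_le (ENNReal.add_lt_add hA hB) hμν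
          rw [if_pos hy, hFval, hGval, if_pos hA, if_pos hB]
        · rw [hGval, if_neg hB, hzeroR _ (hFI μ)]
          split
          · exact (hmaps c d hcI hdI).1
          · exact le_rfl
      · rw [hFval, if_neg hA, hzeroL _ (hGI ν)]
        split
        · exact (hmaps c d hcI hdI).1
        · exact le_rfl
    apply le_antisymm
    · exact csSup_le (Tne _ _ _) hub
    · by_cases hy : A + B < y
      · rw [if_pos hy]
        apply le_csSup ⟨_, hub⟩
        -- construct witnesses
        set δ := (y - (A + B)) / 2 with hδ
        have hδ0 : δ ≠ 0 := by
          have h1 : y - (A + B) ≠ 0 := (tsub_pos_of_lt hy).ne'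
          simp [hδ, ENNReal.div_eq_zero_iff, h1]
        have hAfin : A ≠ ⊤ := by
          intro hA; rw [hA] at hy; simp at hy
        have hBfin : B ≠ ⊤ := by
          intro hB; rw [hB] at hy; simp [add_comm] at hy
        refine ⟨A + δ, B + δ, ?_, ?_⟩
        · have : A + δ + (B + δ) = (A + B) + (δ + δ) := by ring
          rw [this, ENNReal.add_halves, add_tsub_cancel_of_le hy.le]
        · rw [hFval, hGval, if_pos (ENNReal.lt_add_right hAfin hδ0),
            if_pos (ENNReal.lt_add_right hBfin hδ0)]
      · rw [if_neg hy]
        apply le_csSup ⟨_, hub⟩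
        refine ⟨0, 0, by simp, ?_⟩
        rw [hFval, hGval, if_neg (by simp), if_neg (by simp)]
        exact (hzeroL 0 icc0).symm
  -- shrinking lemma: can decrease the first coordinate strictly
  have shrinkL : ∀ (f g : DistFun) (u v : ENNReal) (t : ℝ), 0 ≤ t →
      t < odot (f.1 u) (g.1 v) → ∃ a < u, t < odot (f.1 a) (g.1 v) := by
    intro f g u v t ht0 htlt
    have hu0 : u ≠ 0 := by
      rintro rfl
      rw [distfun_zero f, hzeroL _ (distfun_mem g v)] at htlt
      linarith
    have hne : (f.1 '' Set.Iio u).Nonempty := ⟨f.1 0, 0, pos_iff_ne_zero.mpr hu0, rfl⟩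
    have hsub : f.1 '' Set.Iio u ⊆ Set.Icc (0:ℝ) 1 := by
      rintro _ ⟨a, _, rfl⟩; exact distfun_mem f a
    have key : odot (f.1 u) (g.1 v) = sSup ((odot (g.1 v)) '' (f.1 '' Set.Iio u)) := by
      rw [hcomm, distfun_lc f u]
      exact hsupcont (g.1 v) (distfun_mem g v) _ hne hsub
    rw [key] at htlt
    obtain ⟨_, ⟨_, ⟨a, ha, rfl⟩, rfl⟩, hgt⟩ := exists_lt_of_lt_csSup (hne.image _) htlt
    exact ⟨a, ha, by rwa [hcomm]⟩
  have shrinkR : ∀ (f g : DistFun) (u v : ENNReal) (t : ℝ), 0 ≤ t →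
      t < odot (f.1 u) (g.1 v) → ∃ b < v, t < odot (f.1 u) (g.1 b) := by
    intro f g u v t ht0 htlt
    obtain ⟨b, hb, hgt⟩ := shrinkL g f v u t ht0 (by rwa [hcomm])
    exact ⟨b, hb, by rwa [hcomm]⟩
  -- the main statement
  intro f g h x
  set S := {t : ℝ | ∃ f' g' : DistFun, (∀ y, f'.1 y ≤ f.1 y) ∧ (∀ y, g'.1 y ≤ g.1 y) ∧
      (∀ y, DistFun.tens odot f' g' y ≤ h.1 y) ∧ t = DistFun.tens odot f' g' x} with hSdef
  -- the zero distribution function is a member (witnessing 0 ∈ S)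
  have hz01 : (0:ℝ) ≤ 0 ∧ (0:ℝ) ≤ 1 := by norm_num
  have hzS : (0:ℝ) ∈ S := by
    refine ⟨stepFun ⊤ 0 hz01.1 hz01.2, stepFun ⊤ 0 hz01.1 hz01.2, ?_, ?_, ?_, ?_⟩
    · intro y
      rw [show (stepFun ⊤ 0 hz01.1 hz01.2).1 y = if (⊤:ENNReal) < y then (0:ℝ) else 0 from rfl]
      split <;> exact distfun_nonneg f y
    · intro y
      rw [show (stepFun ⊤ 0 hz01.1 hz01.2).1 y = if (⊤:ENNReal) < y then (0:ℝ) else 0 from rfl]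
      split <;> exact distfun_nonneg g y
    · intro y
      rw [tens_step]
      split <;> [exact (hzeroL 0 icc0).trans_le (distfun_nonneg h y);
        exact distfun_nonneg h y]
    · rw [tens_step, if_neg (by simp)]
  have hSbdd : BddAbove S := by
    refine ⟨1, ?_⟩
    rintro _ ⟨F, G, _, _, _, rfl⟩
    exact tens_le_one F G x
  apply le_antisymm
  · -- hard direction
    apply le_of_forall_lt
    intro t ht
    rw [lt_min_iff] at ht
    obtain ⟨hth, httens⟩ := ht
    rcases lt_or_ge t 0 with ht0 | ht0
    · exact lt_csSup_of_lt hSbdd hzS ht0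
    -- t ≥ 0 case
    -- Step A: find u v with u+v ≤ x and t < odot (f u) (g v)
    obtain ⟨_, ⟨u, v, huv, rfl⟩, htuv⟩ := exists_lt_of_lt_csSup (Tne f g x) httens
    -- shrink both coordinates
    obtain ⟨a, hau, hta⟩ := shrinkL f g u v t ht0 htuv
    obtain ⟨b, hbv, htb⟩ := shrinkR f g a v t ht0 hta
    have habx : a + b < x := lt_of_lt_of_le (ENNReal.add_lt_add hau hbv) huv
    -- Step B: left-continuity of h at x
    have hx0 : x ≠ 0 := by
      rintro rfl
      rw [distfun_zero h] at hth
      linarith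
    have hhne : (h.1 '' Set.Iio x).Nonempty := ⟨h.1 0, 0, pos_iff_ne_zero.mpr hx0, rfl⟩
    rw [distfun_lc h x] at hth
    obtain ⟨_, ⟨p, hpx, rfl⟩, htp⟩ := exists_lt_of_lt_csSup hhne hth
    set P := max p (a + b) with hPdef
    have hPx : P < x := max_lt hpx habx
    have htP : t < h.1 P := lt_of_lt_of_le htp (distfun_mono h (le_max_left _ _))
    have habP : a + b ≤ P := le_max_right _ _
    have hPfin : P ≠ ⊤ := by
      intro hP; rw [hP] at hPx; simp at hPx
    have hbfin : b ≠ ⊤ := by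
      intro hb
      apply hPfin
      rw [hb] at habP
      simpa using (top_le_iff.mp (le_trans (by simp) habP))
    -- thresholds
    set A := P - b with hAdef
    have haA : a ≤ A := ENNReal.le_sub_of_add_le_right hbfin habP
    have hAB : A + b = P := tsub_add_cancel_of_le (le_trans le_add_self habP)
    -- Step C: scalar interpolation
    have hminlt : t < min (h.1 P) (odot (f.1 a) (g.1 b)) := lt_min htP htb
    rw [hint (f.1 a) (g.1 b) (h.1 P) (distfun_mem f a) (distfun_mem g b)
      (distfun_mem h P)] at hminlt
    have hintne : {x : ℝ | ∃ u' v', u' ∈ Set.Icc (0:ℝ) 1 ∧ v' ∈ Set.Icc (0:ℝ) 1 ∧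
        u' ≤ f.1 a ∧ v' ≤ g.1 b ∧ odot u' v' ≤ h.1 P ∧ x = odot u' v'}.Nonempty := by
      refine ⟨odot 0 0, 0, 0, icc0, icc0, distfun_nonneg f a, distfun_nonneg g b, ?_, rfl⟩
      rw [hzeroL 0 icc0]
      exact le_of_lt (lt_of_le_of_lt ht0 htP)
    obtain ⟨_, ⟨u', v', hu'I, hv'I, hu'le, hv'le, hvw, rfl⟩, htgood⟩ :=
      exists_lt_of_lt_csSup hintne hminlt
    -- Step D: the step functions
    set F := stepFun A u' hu'I.1 hu'I.2 with hF
    set G := stepFun b v' hv'I.1 hv'I.2 with hG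
    have hFle : ∀ y, F.1 y ≤ f.1 y := by
      intro y
      rw [show F.1 y = if A < y then u' else 0 from rfl]
      split
      · next hy => exact le_trans hu'le (distfun_mono f (le_of_lt (lt_of_le_of_lt haA hy)))
      · exact distfun_nonneg f y
    have hGle : ∀ y, G.1 y ≤ g.1 y := by
      intro y
      rw [show G.1 y = if b < y then v' else 0 from rfl]
      split
      · next hy => exact le_trans hv'le (distfun_mono g (le_of_lt hy))
      · exact distfun_nonneg g y
    have hFGh : ∀ y, DistFun.tens odot F G y ≤ h.1 y := by
      intro y
      rw [hF, hG, tens_step, hAB]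
      split
      · next hy => exact le_trans hvw (distfun_mono h (le_of_lt hy))
      · exact distfun_nonneg h y
    have hFGx : DistFun.tens odot F G x = odot u' v' := by
      rw [hF, hG, tens_step, hAB, if_pos hPx]
    refine lt_csSup_of_lt hSbdd ⟨F, G, hFle, hGle, hFGh, hFGx.symm⟩ ?_
    exact htgood
  · -- easy direction
    apply csSup_le ⟨0, hzS⟩
    rintro _ ⟨F, G, hFle, hGle, hFGh, rfl⟩
    apply le_min (hFGh x)
    apply csSup_le (Tne F G x)
    rintro _ ⟨u, v, huv, rfl⟩
    apply le_trans (hmono2 _ _ _ _ (distfun_mem F u) (distfun_mem f u)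
      (distfun_mem G v) (distfun_mem g v) (hFle u) (hGle v))
    exact le_csSup (Tbdd f g x) ⟨u, v, huv, rfl⟩
end

section
/- For the ultrafilter functor U and a completely distributive lattice V with ξ(𝔵) = ⋀_{A ∈ 𝔵} ⋁A and ⊗ = ∧, the map ξ satisfies: for every ultrafilter 𝔴 on V × V, ⋀_{C ∈ 𝔴} ⋁_{(u,v) ∈ C} (u ∧ v) = (⋀_{A ∈ π₁𝔴} ⋁A) ∧ (⋀_{B ∈ π₂𝔴} ⋁B), where π₁𝔴, π₂𝔴 are the image ultrafilters under the projections; i.e. ξ ∘ U(∧) = ∧ ∘ ⟨ξ∘Uπ₁, ξ∘Uπ₂⟩ on U(V × V). -/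
/-!
`ξ 𝔵` is `limsSup 𝔵`, so the claim is that `limsup` along an ultrafilter commutes with `⊓`.
Complete distributivity lets us approximate `a := limsup fst 𝔴 ⊓ limsup snd 𝔴` from below by
elements `r` totally below it. Such an `r` is below `p.1` for `𝔴`-almost all `p`: otherwise the
set where it fails belongs to the ultrafilter, so `a` lies below the supremum of `fst` over it,
and `r` would be below one of its values. Likewise for `p.2`, so `r ≤ p.1 ⊓ p.2` almost surely.
-/

open Filter

section

variable {α V : Type*}

def TotallyBelow [CompleteLattice V] (r a : V) : Prop :=
  ∀ S : Set V, a ≤ sSup S → ∃ s ∈ S, r ≤ s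

theorem TotallyBelow.le [CompleteLattice V] {r a : V} (h : TotallyBelow r a) : r ≤ a := by
  obtain ⟨s, rfl, hrs⟩ := h {a} (by simp)
  exact hrs

theorem TotallyBelow.mono_right [CompleteLattice V] {r a b : V} (h : TotallyBelow r a)
    (hab : a ≤ b) : TotallyBelow r b :=
  fun S hS => h S (hab.trans hS)

theorem sSup_setOf_totallyBelow [CompletelyDistribLattice V] (a : V) :
    sSup {r | TotallyBelow r a} = a := by
  refine le_antisymm (sSup_le fun r hr => hr.le) ?_
  let ι := {S : Set V // a ≤ sSup S}
  -- Choosing one element from each set whose supremum dominates `a`, the meet of the choice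
  -- is totally below `a`; complete distributivity says these meets have supremum `a`.
  calc a ≤ ⨅ S : ι, ⨆ s : (S : Set V), (s : V) :=
        le_iInf fun S => by simpa [sSup_eq_iSup'] using S.2
    _ = ⨆ f : ∀ S : ι, (S : Set V), ⨅ S, (f S : V) := iInf_iSup_eq
    _ ≤ sSup {r | TotallyBelow r a} := iSup_le fun f =>
      le_sSup fun S hS => ⟨f ⟨S, hS⟩, (f ⟨S, hS⟩).2, iInf_le _ (⟨S, hS⟩ : ι)⟩

theorem TotallyBelow.eventually_le_of_limsup [CompleteLattice V] {u : Ultrafilter α}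
    {f : α → V} {r : V} (hr : TotallyBelow r (limsup f u)) : ∀ᶠ x in u, r ≤ f x := by
  by_contra hfreq
  set S := {x | ¬ r ≤ f x}
  have hS : S ∈ u := Ultrafilter.compl_mem_iff_notMem.2 hfreq
  have hlim : limsup f u ≤ sSup (f '' S) :=
    limsup_le_of_le (h := eventually_of_mem hS fun x hx => le_sSup (Set.mem_image_of_mem f hx))
  obtain ⟨_, ⟨x, hx, rfl⟩, hrx⟩ := hr _ hlim
  exact hx hrx

theorem Ultrafilter.limsup_inf [CompletelyDistribLattice V] (u : Ultrafilter α) (f g : α → V) :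
    limsup (fun x => f x ⊓ g x) u = limsup f u ⊓ limsup g u := by
  refine le_antisymm (le_inf (limsup_le_limsup (.of_forall fun _ => inf_le_left))
    (limsup_le_limsup (.of_forall fun _ => inf_le_right))) ?_
  rw [← sSup_setOf_totallyBelow (limsup f u ⊓ limsup g u)]
  refine sSup_le fun r hr => le_limsup_of_frequently_le' (Eventually.frequently ?_)
  filter_upwards [(hr.mono_right inf_le_left).eventually_le_of_limsup,
    (hr.mono_right inf_le_right).eventually_le_of_limsup] with x hf hg
  exact le_inf hf hg

end

/-- For a completely distributive complete lattice `V`, `ξ(𝔵) = ⋀_{A ∈ 𝔵} ⋁A`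
satisfies `ξ ∘ U(∧) = ∧ ∘ ⟨ξ ∘ Uπ₁, ξ ∘ Uπ₂⟩`: for every ultrafilter `𝔴` on `V × V`,
`⋀_{C ∈ 𝔴} ⋁_{(u,v) ∈ C} (u ∧ v)
  = (⋀_{A ∈ π₁𝔴} ⋁A) ⊓ (⋀_{B ∈ π₂𝔴} ⋁B)`. -/
theorem xi_commutes_with_meet {V : Type*} [CompletelyDistribLattice V]
    (w : Ultrafilter (V × V)) :
    (⨅ C ∈ w, ⨆ p ∈ C, (p.1 ⊓ p.2 : V)) =
      (⨅ A ∈ w.map Prod.fst, sSup A) ⊓ (⨅ B ∈ w.map Prod.snd, sSup B) := by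
  have xi_map (f : V × V → V) : ⨅ A ∈ w.map f, sSup A = limsup f w :=
    limsSup_eq_iInf_sSup.symm
  calc (⨅ C ∈ w, ⨆ p ∈ C, (p.1 ⊓ p.2 : V)) = limsup (fun p : V × V => p.1 ⊓ p.2) w :=
        limsup_eq_iInf_iSup.symm
    _ = limsup Prod.fst w ⊓ limsup Prod.snd w := w.limsup_inf _ _
    _ = _ := by rw [xi_map, xi_map]
end
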